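/- Let J_x = J_y = 0, J_z ∈ ℝ, D ∈ ℝ (the anti-continuum limit). Let (s_n)_{n∈ℤ} be any sequence with s_n ∈ [−1,1] and (φ_n)_{n∈ℤ} any sequence of phases, and set A_n = √(1 − s_n²) and ω_n = (J_z/2)(s_{n−1} + s_{n+1}) + 2D s_n. Then the functions S_n^x(t) = A_n cos(ω_n t + φ_n), S_n^y(t) = A_n sin(ω_n t + φ_n), S_n^z(t) = s_n solve the Landau–Lifshitz equations for all n ∈ ℤ and t ∈ ℝ, and each spin has unit length. -/
import Mathlib


/-- The Landau–Lifshitz equations for a chain of classical spins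
`S_n = (S_n^x, S_n^y, S_n^z)`, `n ∈ ℤ`, with exchange constants
`J_x, J_y, J_z` and single-ion anisotropy `D`. -/
def LandauLifshitz (Jx Jy Jz D : ℝ) (Sx Sy Sz : ℤ → ℝ → ℝ) : Prop :=
  ∀ (n : ℤ) (t : ℝ),
    deriv (Sx n) t =
        1 / 2 * (Jy * Sz n t * (Sy (n - 1) t + Sy (n + 1) t)
          - Jz * Sy n t * (Sz (n - 1) t + Sz (n + 1) t)) - 2 * D * Sy n t * Sz n t ∧
    deriv (Sy n) t =
        1 / 2 * (Jz * Sx n t * (Sz (n - 1) t + Sz (n + 1) t)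
          - Jx * Sz n t * (Sx (n - 1) t + Sx (n + 1) t)) + 2 * D * Sx n t * Sz n t ∧
    deriv (Sz n) t =
        1 / 2 * (Jx * Sy n t * (Sx (n - 1) t + Sx (n + 1) t)
          - Jy * Sx n t * (Sy (n - 1) t + Sy (n + 1) t))

/-- In the anti-continuum limit `J_x = J_y = 0` with arbitrary
`J_z, D`, for any `s_n ∈ [−1,1]`, phases `φ_n`, `A_n = √(1 − s_n²)` and
`ω_n = (J_z/2)(s_{n−1} + s_{n+1}) + 2D s_n`, the precessional configuration
`S_n(t) = (A_n cos(ω_n t + φ_n), A_n sin(ω_n t + φ_n), s_n)` solves the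
Landau–Lifshitz equations and each spin has unit length. -/
theorem anticontinuum_precession_solution
    (Jz D : ℝ) (s : ℤ → ℝ) (hs : ∀ n, -1 ≤ s n ∧ s n ≤ 1) (φ : ℤ → ℝ)
    (A ω : ℤ → ℝ)
    (hA : ∀ n, A n = Real.sqrt (1 - (s n) ^ 2))
    (hω : ∀ n, ω n = Jz / 2 * (s (n - 1) + s (n + 1)) + 2 * D * s n) :
    LandauLifshitz 0 0 Jz D
      (fun n t => A n * Real.cos (ω n * t + φ n))
      (fun n t => A n * Real.sin (ω n * t + φ n))
      (fun n _ => s n) ∧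
    ∀ (n : ℤ) (t : ℝ),
      (A n * Real.cos (ω n * t + φ n)) ^ 2 + (A n * Real.sin (ω n * t + φ n)) ^ 2
        + (s n) ^ 2 = 1 := by
  constructor
  · intro n t
    have hdx : deriv (fun t => A n * Real.cos (ω n * t + φ n)) t
        = A n * (-Real.sin (ω n * t + φ n)) * ω n := by
      have h1 : HasDerivAt (fun t : ℝ => ω n * t + φ n) (ω n) t := by
        simpa using ((hasDerivAt_id t).const_mul (ω n)).add_const (φ n)
      have := ((Real.hasDerivAt_cos (ω n * t + φ n)).comp t h1).const_mul (A n)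
      simpa [mul_comm, mul_assoc, mul_left_comm] using this.deriv
    have hdy : deriv (fun t => A n * Real.sin (ω n * t + φ n)) t
        = A n * Real.cos (ω n * t + φ n) * ω n := by
      have h1 : HasDerivAt (fun t : ℝ => ω n * t + φ n) (ω n) t := by
        simpa using ((hasDerivAt_id t).const_mul (ω n)).add_const (φ n)
      have := ((Real.hasDerivAt_sin (ω n * t + φ n)).comp t h1).const_mul (A n)
      simpa [mul_comm, mul_assoc, mul_left_comm] using this.deriv
    refine ⟨?_, ?_, ?_⟩
    · rw [hdx]; set c := Real.sin (ω n * t + φ n) with hc; rw [hω n]; ring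
    · rw [hdy]; set c := Real.cos (ω n * t + φ n) with hc; rw [hω n]; ring
    · simp
  · intro n t
    have h1 : (1 : ℝ) - (s n) ^ 2 ≥ 0 := by nlinarith [(hs n).1, (hs n).2]
    have hA2 : (A n) ^ 2 = 1 - (s n) ^ 2 := by
      rw [hA]; exact Real.sq_sqrt h1
    have := Real.sin_sq_add_cos_sq (ω n * t + φ n)
    nlinarith [this, hA2]
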